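/- (Lemma 2c) Under the hypotheses of the nonnegative bivariate decomposition, if f* attains the maximum in SĪ(S;X₁,X₂) = max_f SI(f(S);X₁,X₂), then UI(f*(S);X₁\X₂) ≤ ŪI*(S;X₁\X₂) ≤ UI(S;X₁\X₂), where ŪI*(S;X₁\X₂) := I(S;X₁) − SĪ(S;X₁,X₂). -/

import Mathlib

/- Common definitions: finite joint distributions, mutual information (in nats),
   conditional mutual information, pushforwards, information decompositions. -/

open Finset
open scoped Classical

namespace Paper

noncomputable section

variable {S T T' X X₁ X₂ Z A B : Type*}

/-- Marginal of the first variable of a joint distribution. -/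
def m1 [Fintype X] (p : S → X → ℝ) (s : S) : ℝ := ∑ x, p s x

/-- Marginal of the second variable of a joint distribution. -/
def m2 [Fintype S] (p : S → X → ℝ) (x : X) : ℝ := ∑ s, p s x

/-- Mutual information I(S;X) (in nats) of a finite joint distribution. -/
def MI [Fintype S] [Fintype X] (p : S → X → ℝ) : ℝ :=
  ∑ s, ∑ x, p s x * Real.log (p s x / (m1 p s * m2 p x))

/-- `p` is a probability mass function on the product of two finite alphabets. -/
def IsPMF [Fintype S] [Fintype X] (p : S → X → ℝ) : Prop :=
  (∀ s x, 0 ≤ p s x) ∧ ∑ s, ∑ x, p s x = 1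

/-- `p` is a probability mass function on the product of three finite alphabets. -/
def IsPMF3 [Fintype S] [Fintype X₁] [Fintype X₂] (p : S → X₁ → X₂ → ℝ) : Prop :=
  (∀ s x₁ x₂, 0 ≤ p s x₁ x₂) ∧ ∑ s, ∑ x₁, ∑ x₂, p s x₁ x₂ = 1

/-- Marginal joint distribution of (S,X₁). -/
def m12 [Fintype X₂] (p : S → X₁ → X₂ → ℝ) : S → X₁ → ℝ := fun s x₁ => ∑ x₂, p s x₁ x₂

/-- Marginal joint distribution of (S,X₂). -/
def m13 [Fintype X₁] (p : S → X₁ → X₂ → ℝ) : S → X₂ → ℝ := fun s x₂ => ∑ x₁, p s x₁ x₂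

/-- Joint distribution of (S,(X₁,X₂)). -/
def joint (p : S → X₁ → X₂ → ℝ) : S → X₁ × X₂ → ℝ := fun s x => p s x.1 x.2

/-- I(S;X₁). -/
def MI1 [Fintype S] [Fintype X₁] [Fintype X₂] (p : S → X₁ → X₂ → ℝ) : ℝ := MI (m12 p)

/-- I(S;X₂). -/
def MI2 [Fintype S] [Fintype X₁] [Fintype X₂] (p : S → X₁ → X₂ → ℝ) : ℝ := MI (m13 p)

/-- I(S;X₁X₂). -/
def MI12 [Fintype S] [Fintype X₁] [Fintype X₂] (p : S → X₁ → X₂ → ℝ) : ℝ := MI (joint p)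

/-- Conditional mutual information I(S;X₁ ∣ X₂) (in nats). -/
def CMI [Fintype S] [Fintype X₁] [Fintype X₂] (p : S → X₁ → X₂ → ℝ) : ℝ :=
  ∑ s, ∑ x₁, ∑ x₂, p s x₁ x₂ *
    Real.log ((p s x₁ x₂ * (∑ s', ∑ x₁', p s' x₁' x₂)) /
      ((∑ x₁', p s x₁' x₂) * (∑ s', p s' x₁ x₂)))

/-- Co-information CoI(S;X₁,X₂) = I(S;X₁) − I(S;X₁|X₂). -/
def CoI [Fintype S] [Fintype X₁] [Fintype X₂] (p : S → X₁ → X₂ → ℝ) : ℝ :=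
  MI1 p - CMI p

/-- Swap the two predictor arguments. -/
def swap23 (p : S → X₁ → X₂ → ℝ) : S → X₂ → X₁ → ℝ := fun s x₂ x₁ => p s x₁ x₂

/-- Pushforward of the target variable S by a function f (joint of (f(S),X)). -/
def pushS [Fintype S] (f : S → T) (p : S → X → ℝ) : T → X → ℝ :=
  fun t x => ∑ s, if f s = t then p s x else 0

/-- Pushforward of the target variable S by f, for triples (joint of (f(S),X₁,X₂)). -/
def pushS3 [Fintype S] (f : S → T) (p : S → X₁ → X₂ → ℝ) : T → X₁ → X₂ → ℝ :=
  fun t x₁ x₂ => ∑ s, if f s = t then p s x₁ x₂ else 0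

/-- Joint distribution of the triple (f(S), S, X), from the joint of (S,X). -/
def tripleOf (f : S → T) (p : S → X → ℝ) : T → S → X → ℝ :=
  fun t s x => if f s = t then p s x else 0

/-- A and B are conditionally independent given Z (r is the joint of (Z,A,B));
    equivalently A — Z — B is a Markov chain. -/
def CondIndep [Fintype A] [Fintype B] (r : Z → A → B → ℝ) : Prop :=
  ∀ z a b, r z a b * (∑ a', ∑ b', r z a' b') = (∑ b', r z a b') * (∑ a', r z a' b)

/-- The channel T → X₁ (given by the joint q1) is a garbling/degradation of the
    channel T → X₂ (given by the joint q2): q1 = λ ∘ q2 for a stochastic matrix λ. -/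
def Garbling [Fintype X₁] [Fintype X₂] (q1 : T → X₁ → ℝ) (q2 : T → X₂ → ℝ) : Prop :=
  ∃ lam : X₂ → X₁ → ℝ, (∀ x₂ x₁, 0 ≤ lam x₂ x₁) ∧ (∀ x₂, ∑ x₁, lam x₂ x₁ = 1) ∧
    ∀ t x₁, q1 t x₁ = ∑ x₂, lam x₂ x₁ * q2 t x₂

/-- Joint distribution of (COPY(X₁,X₂), X₁, X₂) built from the joint of (X₁,X₂). -/
def copyTriple (q : X₁ → X₂ → ℝ) : X₁ × X₂ → X₁ → X₂ → ℝ :=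
  fun t x₁ x₂ => if t = (x₁, x₂) then q x₁ x₂ else 0

/-- The extractable information measure IM̄(S;X) := max over functions f on the
    range of S of IM(f(S);X).  (Only the partition of S induced by f matters,
    so functions with codomain S suffice and the supremum is attained.) -/
def extIM [Fintype S] [Fintype X] (IM : (S → X → ℝ) → ℝ) (p : S → X → ℝ) : ℝ :=
  ⨆ f : S → S, IM (pushS f p)

/-- A nonnegative bivariate information decomposition (for fixed predictor
    alphabets X₁, X₂ and varying target alphabet T): shared, unique and
    complementary information, nonnegative and satisfying the Williams–Beer
    bivariate decomposition equations. -/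
structure BID (X₁ X₂ : Type) [Fintype X₁] [Fintype X₂] where
  SI : ∀ (T : Type) [Fintype T], (T → X₁ → X₂ → ℝ) → ℝ
  UI1 : ∀ (T : Type) [Fintype T], (T → X₁ → X₂ → ℝ) → ℝ
  UI2 : ∀ (T : Type) [Fintype T], (T → X₁ → X₂ → ℝ) → ℝ
  CI : ∀ (T : Type) [Fintype T], (T → X₁ → X₂ → ℝ) → ℝ
  SI_nonneg : ∀ (T : Type) [Fintype T] (p : T → X₁ → X₂ → ℝ), IsPMF3 p → 0 ≤ SI T p
  UI1_nonneg : ∀ (T : Type) [Fintype T] (p : T → X₁ → X₂ → ℝ), IsPMF3 p → 0 ≤ UI1 T p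
  UI2_nonneg : ∀ (T : Type) [Fintype T] (p : T → X₁ → X₂ → ℝ), IsPMF3 p → 0 ≤ UI2 T p
  CI_nonneg : ∀ (T : Type) [Fintype T] (p : T → X₁ → X₂ → ℝ), IsPMF3 p → 0 ≤ CI T p
  eq_total : ∀ (T : Type) [Fintype T] (p : T → X₁ → X₂ → ℝ), IsPMF3 p →
    MI12 p = SI T p + CI T p + UI1 T p + UI2 T p
  eq_one : ∀ (T : Type) [Fintype T] (p : T → X₁ → X₂ → ℝ), IsPMF3 p →
    MI1 p = SI T p + UI1 T p
  eq_two : ∀ (T : Type) [Fintype T] (p : T → X₁ → X₂ → ℝ), IsPMF3 p →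
    MI2 p = SI T p + UI2 T p

/-- Extractable shared information SĪ(S;X₁,X₂) := max_f SI(f(S);X₁,X₂). -/
def SIbar {X₁ X₂ : Type} [Fintype X₁] [Fintype X₂] (D : BID X₁ X₂)
    {T : Type} [Fintype T] (p : T → X₁ → X₂ → ℝ) : ℝ :=
  ⨆ f : T → T, D.SI T (pushS3 f p)

/-- Pushforward of the predictors (X₁,...,X_k) ↦ (f₁(X₁),...,f_k(X_k)). -/
def pushPred {ι : Type*} [Fintype ι] [DecidableEq ι] {X : ι → Type*} [∀ i, Fintype (X i)]
    [Fintype S] (f : ∀ i, X i → X i) (p : S → (∀ i, X i) → ℝ) : S → (∀ i, X i) → ℝ :=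
  fun s y => ∑ x, if (fun i => f i (x i)) = y then p s x else 0

/-- Marginal joint distribution of (S, X_i) for a family of predictors. -/
def margFam {ι : Type*} [Fintype ι] [DecidableEq ι] (X : ι → Type*) [∀ i, Fintype (X i)]
    [Fintype S] (p : S → (∀ i, X i) → ℝ) (i : ι) (s : S) (y : X i) : ℝ :=
  ∑ x : ∀ j, X j, if x i = y then p s x else 0

/-- Specific information of s provided by X_i:
    ∑_{x_i} P(x_i|s) log (P(s|x_i)/P(s)). -/
def specInfo {ι : Type*} [Fintype ι] [DecidableEq ι] (X : ι → Type*) [∀ i, Fintype (X i)]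
    [Fintype S] (p : S → (∀ i, X i) → ℝ) (i : ι) (s : S) : ℝ :=
  ∑ y : X i, (margFam X p i s y / m1 p s) *
    Real.log ((margFam X p i s y / (∑ s', margFam X p i s' y)) / m1 p s)

/-- Williams and Beer's measure I_min(S;X₁,...,X_k). -/
def Imin {ι : Type*} [Fintype ι] [DecidableEq ι] [Nonempty ι] (X : ι → Type*)
    [∀ i, Fintype (X i)] [Fintype S] (p : S → (∀ i, X i) → ℝ) : ℝ :=
  ∑ s, m1 p s * ⨅ i, specInfo X p i s

/-- The counterexample distribution on {0,1,2} × {0,1} × {0,1}: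
    P(0,0,0)=1/4, P(1,0,1)=1/4, P(0,1,0)=1/8, P(1,1,0)=1/8, P(2,1,1)=1/4. -/
def cex : Fin 3 → Bool → Bool → ℝ := fun s x₁ x₂ =>
  if s = 0 ∧ x₁ = false ∧ x₂ = false then 1/4
  else if s = 1 ∧ x₁ = false ∧ x₂ = true then 1/4
  else if s = 0 ∧ x₁ = true ∧ x₂ = false then 1/8
  else if s = 1 ∧ x₁ = true ∧ x₂ = false then 1/8
  else if s = 2 ∧ x₁ = true ∧ x₂ = true then 1/4
  else 0

/-- The function f with f(0)=f(1)=0, f(2)=2 on Fin 3 (the partition {0,1},{2}). -/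
def fstar : Fin 3 → Fin 3 := fun s => if s = 2 then 2 else 0

/-! The identity I(f(S);X₁) = SI + UI at f = f* gives UI(f*(S)) = I(f*(S);X₁) − SĪ, which is at
most I(S;X₁) − SĪ by data processing; at f = id it gives UI(S) = I(S;X₁) − SI(S) ≥ I(S;X₁) − SĪ.
The supremum SĪ is finite since SI(f(S)) ≤ I(f(S);X₁) ≤ I(S;X₁). Data processing for a function of
the target is the log-sum inequality applied on each fibre of f. -/

theorem mul_log_add_sub_mul_le_mul_log_div {a b u : ℝ} (ha : 0 ≤ a) (hb : 0 ≤ b) (hu : 0 < u)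
    (hab : 0 < a → 0 < b) : a * Real.log u + a - b * u ≤ a * Real.log (a / b) := by
  rcases ha.eq_or_lt with rfl | ha
  · simp only [zero_mul, add_zero, zero_sub, neg_nonpos]
    positivity
  have hb := hab ha
  have key := Real.one_sub_inv_le_log_of_pos (show 0 < a / (b * u) by positivity)
  rw [Real.log_div ha.ne' (by positivity), Real.log_mul hb.ne' hu.ne', inv_div] at key
  have : a * (1 - b * u / a) = a - b * u := by field_simp
  rw [Real.log_div ha.ne' hb.ne']
  nlinarith

theorem sum_mul_log_div_sum_le {ι : Type*} (s : Finset ι) {a b : ι → ℝ}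
    (ha : ∀ i ∈ s, 0 ≤ a i) (hb : ∀ i ∈ s, 0 ≤ b i) (hab : ∀ i ∈ s, 0 < a i → 0 < b i) :
    (∑ i ∈ s, a i) * Real.log ((∑ i ∈ s, a i) / ∑ i ∈ s, b i) ≤
      ∑ i ∈ s, a i * Real.log (a i / b i) := by
  rcases (Finset.sum_nonneg ha).eq_or_lt with hA | hA
  · rw [← hA, zero_mul]
    have := (Finset.sum_eq_zero_iff_of_nonneg ha).1 hA.symm
    exact (Finset.sum_eq_zero fun i hi => by simp [this i hi]).ge
  obtain ⟨i, hi, hai⟩ : ∃ i ∈ s, 0 < a i :=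
    Finset.exists_lt_of_sum_lt (by simpa using hA)
  have hB : 0 < ∑ i ∈ s, b i := Finset.sum_pos' hb ⟨i, hi, hab i hi hai⟩
  set u := (∑ i ∈ s, a i) / ∑ i ∈ s, b i
  calc (∑ i ∈ s, a i) * Real.log u
      = ∑ i ∈ s, (a i * Real.log u + a i - b i * u) := by
        simp only [Finset.sum_sub_distrib, Finset.sum_add_distrib, ← Finset.sum_mul, u]
        field_simp
        ring
    _ ≤ ∑ i ∈ s, a i * Real.log (a i / b i) :=
        Finset.sum_le_sum fun i hi =>
          mul_log_add_sub_mul_le_mul_log_div (ha i hi) (hb i hi) (by positivity) (hab i hi)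

theorem pushS_apply [Fintype S] (f : S → T) (q : S → X → ℝ) (t : T) (x : X) :
    pushS f q t x = ∑ s with f s = t, q s x :=
  (Finset.sum_filter _ _).symm

theorem m1_pushS [Fintype S] [Fintype X] (f : S → T) (q : S → X → ℝ) (t : T) :
    m1 (pushS f q) t = ∑ s with f s = t, m1 q s := by
  simp only [m1, pushS_apply]
  exact Finset.sum_comm

theorem m2_pushS [Fintype S] [Fintype T] (f : S → T) (q : S → X → ℝ) :
    m2 (pushS f q) = m2 q := by
  ext x
  simp only [m2, pushS_apply]
  exact Finset.sum_fiberwise _ f _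

theorem MI_pushS_le [Fintype S] [Fintype T] [Fintype X] (f : S → T) {q : S → X → ℝ}
    (hq : ∀ s x, 0 ≤ q s x) : MI (pushS f q) ≤ MI q := by
  have hm1 (s : S) : 0 ≤ m1 q s := Finset.sum_nonneg fun x _ => hq s x
  have hm2 (x : X) : 0 ≤ m2 q x := Finset.sum_nonneg fun s _ => hq s x
  have hpos (s : S) (x : X) (h : 0 < q s x) : 0 < m1 q s * m2 q x :=
    mul_pos (h.trans_le (Finset.single_le_sum (fun x _ => hq s x) (Finset.mem_univ x)))
      (h.trans_le (Finset.single_le_sum (fun s _ => hq s x) (Finset.mem_univ s)))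
  calc MI (pushS f q)
      = ∑ t, ∑ x, (∑ s with f s = t, q s x) *
          Real.log ((∑ s with f s = t, q s x) / ∑ s with f s = t, m1 q s * m2 q x) := by
        simp only [MI, m2_pushS, m1_pushS, pushS_apply, Finset.sum_mul]
    _ ≤ ∑ t, ∑ x, ∑ s with f s = t, q s x * Real.log (q s x / (m1 q s * m2 q x)) := by
        gcongr with t _ x _
        exact sum_mul_log_div_sum_le _ (fun s _ => hq s x)
          (fun s _ => mul_nonneg (hm1 s) (hm2 x)) (fun s _ => hpos s x)
    _ = MI q := by
        simp only [MI]
        rw [← Finset.sum_fiberwise Finset.univ f]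
        exact Finset.sum_congr rfl fun t _ => Finset.sum_comm

theorem pushS3_apply [Fintype S] (f : S → T) (p : S → X₁ → X₂ → ℝ) (t : T) (x₁ : X₁) (x₂ : X₂) :
    pushS3 f p t x₁ x₂ = ∑ s with f s = t, p s x₁ x₂ :=
  (Finset.sum_filter _ _).symm

theorem pushS3_id [Fintype T] (p : T → X₁ → X₂ → ℝ) : pushS3 id p = p := by
  ext t x₁ x₂
  simp [pushS3]

theorem m12_pushS3 [Fintype S] [Fintype X₂] (f : S → T) (p : S → X₁ → X₂ → ℝ) :
    m12 (pushS3 f p) = pushS f (m12 p) := by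
  ext t x₁
  simp only [m12, pushS_apply, pushS3_apply]
  exact Finset.sum_comm

theorem isPMF3_pushS3 [Fintype S] [Fintype T] [Fintype X₁] [Fintype X₂] (f : S → T)
    {p : S → X₁ → X₂ → ℝ} (hp : IsPMF3 p) : IsPMF3 (pushS3 f p) := by
  refine ⟨fun t x₁ x₂ => ?_, ?_⟩
  · rw [pushS3_apply]
    exact Finset.sum_nonneg fun s _ => hp.1 s x₁ x₂
  · change ∑ t, m1 (m12 (pushS3 f p)) t = 1
    simp only [m12_pushS3, m1_pushS]
    exact (Finset.sum_fiberwise _ f _).trans hp.2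

theorem MI1_pushS3_le [Fintype S] [Fintype T] [Fintype X₁] [Fintype X₂] (f : S → T)
    {p : S → X₁ → X₂ → ℝ} (hp : ∀ s x₁ x₂, 0 ≤ p s x₁ x₂) : MI1 (pushS3 f p) ≤ MI1 p := by
  rw [MI1, m12_pushS3]
  exact MI_pushS_le f fun s x₁ => Finset.sum_nonneg fun x₂ _ => hp s x₁ x₂

section BID

variable {X₁ X₂ : Type} [Fintype X₁] [Fintype X₂] (D : BID X₁ X₂) {T : Type} [Fintype T]
  {p : T → X₁ → X₂ → ℝ}

theorem BID.SI_le_MI1 (hp : IsPMF3 p) : D.SI T p ≤ MI1 p := by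
  linarith [D.eq_one T p hp, D.UI1_nonneg T p hp]

theorem SI_pushS3_le_SIbar (hp : IsPMF3 p) (g : T → T) : D.SI T (pushS3 g p) ≤ SIbar D p := by
  refine le_ciSup (f := fun g => D.SI T (pushS3 g p)) ⟨MI1 p, ?_⟩ g
  rintro _ ⟨g', rfl⟩
  exact (D.SI_le_MI1 (isPMF3_pushS3 g' hp)).trans (MI1_pushS3_le g' hp.1)

theorem SI_le_SIbar (hp : IsPMF3 p) : D.SI T p ≤ SIbar D p := by
  simpa only [pushS3_id] using SI_pushS3_le_SIbar D hp id

end BID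

/-- Lemma 2c: if f* attains the maximum defining SĪ(S;X₁,X₂), then
UI(f*(S);X₁\X₂) ≤ ŪI*(S;X₁\X₂) ≤ UI(S;X₁\X₂). -/
theorem UIbar_star_bounds {X₁ X₂ : Type} [Fintype X₁] [Fintype X₂]
    (D : BID X₁ X₂) {T : Type} [Fintype T]
    (p : T → X₁ → X₂ → ℝ) (hp : IsPMF3 p)
    (f : T → T) (hf : D.SI T (pushS3 f p) = SIbar D p) :
    D.UI1 T (pushS3 f p) ≤ MI1 p - SIbar D p
    ∧ MI1 p - SIbar D p ≤ D.UI1 T p := by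
  have h_push := D.eq_one T (pushS3 f p) (isPMF3_pushS3 f hp)
  have h_orig := D.eq_one T p hp
  have h_dpi := MI1_pushS3_le f hp.1
  have h_SI := SI_le_SIbar D hp
  constructor <;> linarith

end
end Paper
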